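/- For c > 0, define g₊(c) = (1 + √(1+16c))/4, g₋(c) = (1 − √(1+16c))/4, A₊(c) = −1/2 + 1/(2√(1+16c)), A₋(c) = −1/2 − 1/(2√(1+16c)). Then the solution f_c of f_c'(r) = cr/(f_c(r) − r/2), f_c(0) = 1/2 satisfies f_c(r) = r·g_c(r) for r ∈ (0,1], where g_c(r) is the unique element of (g₊(c), ∞) with (1/2)(g_c(r) − g₊(c))^{A₊(c)} (g_c(r) − g₋(c))^{A₋(c)} = r. -/

import Mathlib

/-!
Write `s = √(1 + 16c)` and `G t = f t / t`. The ODE turns into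
`t G' = -(G - g₊)(G - g₋)/(G - 1/2)`, and the exponents `A±` are the partial-fraction
coefficients making `profile s G / t` a first integral wherever `G > g₊`. Near `0`,
`G t ~ 1/(2t)` while `profile s g ~ 1/(2g)` because `A₊ + A₋ = -1`, so the constant is `1`.
Finally `G > g₊` cannot fail: at a first point where `G = g₊`, the identity
`profile s (G t) = t` would force the bounded `t` to tend to `+∞`.
-/

open Set Filter Topology

theorem ContinuousOn.exists_first_zero {u : ℝ → ℝ} {a b t₁ : ℝ} (hu : ContinuousOn u (Icc a b))
    (ha : 0 < u a) (ht₁ : t₁ ∈ Icc a b) (hu₁ : u t₁ ≤ 0) :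
    ∃ r ∈ Ioc a t₁, u r = 0 ∧ ∀ t ∈ Ico a r, 0 < u t := by
  have hsub : Icc a t₁ ⊆ Icc a b := Icc_subset_Icc_right ht₁.2
  set B := Icc a t₁ ∩ u ⁻¹' Iic 0
  have hB : IsClosed B := (hu.mono hsub).preimage_isClosed_of_isClosed isClosed_Icc isClosed_Iic
  have hBbdd : BddBelow B := ⟨a, fun x hx => hx.1.1⟩
  have hr : sInf B ∈ B := hB.csInf_mem ⟨t₁, ⟨ht₁.1, le_rfl⟩, hu₁⟩ hBbdd
  have har : a < sInf B := hr.1.1.lt_of_ne fun h => (h ▸ hr.2 : u a ≤ 0).not_gt ha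
  have hpos : ∀ t ∈ Ico a (sInf B), 0 < u t := fun t ht =>
    not_le.mp fun h => notMem_of_lt_csInf ht.2 hBbdd ⟨⟨ht.1, ht.2.le.trans hr.1.2⟩, h⟩
  refine ⟨sInf B, ⟨har, hr.1.2⟩, le_antisymm hr.2 ?_, hpos⟩
  have hcont : Tendsto u (𝓝[<] (sInf B)) (𝓝 (u (sInf B))) :=
    ((hu _ (hsub hr.1)).mono_of_mem_nhdsWithin
      (Icc_mem_nhdsLT_of_mem ⟨har, hr.1.2.trans ht₁.2⟩)).tendsto
  refine ge_of_tendsto hcont ?_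
  filter_upwards [Ioo_mem_nhdsLT har] with t ht using (hpos t ⟨ht.1.le, ht.2⟩).le

/-- With `s = √(1 + 16c)`, this is `g ↦ (1/2)(g - g₊)^{A₊}(g - g₋)^{A₋}`. -/
noncomputable def profile (s g : ℝ) : ℝ :=
  (1/2) * (g - (1+s)/4) ^ (-(1:ℝ)/2 + 1/(2*s)) * (g - (1-s)/4) ^ (-(1:ℝ)/2 - 1/(2*s))

section profile

variable {s : ℝ}

theorem hasDerivAt_profile (hs : 0 < s) {g : ℝ} (hg : (1+s)/4 < g) :
    HasDerivAt (profile s)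
      (-profile s g * (g - 1/2) / ((g - (1+s)/4) * (g - (1-s)/4))) g := by
  have hP : g - (1+s)/4 ≠ 0 := by linarith
  have hM : g - (1-s)/4 ≠ 0 := by linarith
  have h := ((((hasDerivAt_id g).sub_const ((1+s)/4)).rpow_const
    (p := -(1:ℝ)/2 + 1/(2*s)) (Or.inl hP)).const_mul (1/2 : ℝ)).mul
    (((hasDerivAt_id g).sub_const ((1-s)/4)).rpow_const (p := -(1:ℝ)/2 - 1/(2*s)) (Or.inl hM))
  refine h.congr_deriv ?_
  simp only [profile, id, Real.rpow_sub_one hP, Real.rpow_sub_one hM]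
  generalize (g - (1+s)/4) ^ (-(1:ℝ)/2 + 1/(2*s)) = X
  generalize (g - (1-s)/4) ^ (-(1:ℝ)/2 - 1/(2*s)) = Y
  have hs0 : s ≠ 0 := hs.ne'
  have hP' : g * 4 - (1 + s) ≠ 0 := by linarith
  have hM' : g * 4 - (1 - s) ≠ 0 := by linarith
  field_simp
  ring

theorem profile_pos (hs : 0 < s) {g : ℝ} (hg : (1+s)/4 < g) : 0 < profile s g := by
  unfold profile
  have := Real.rpow_pos_of_pos (by linarith : (0:ℝ) < g - (1+s)/4) (-(1:ℝ)/2 + 1/(2*s))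
  have := Real.rpow_pos_of_pos (by linarith : (0:ℝ) < g - (1-s)/4) (-(1:ℝ)/2 - 1/(2*s))
  positivity

theorem continuousOn_profile (hs : 0 < s) : ContinuousOn (profile s) (Ioi ((1+s)/4)) :=
  fun _ hg => (hasDerivAt_profile hs hg).continuousAt.continuousWithinAt

theorem profile_strictAntiOn (hs : 1 < s) : StrictAntiOn (profile s) (Ioi ((1+s)/4)) := by
  refine strictAntiOn_of_hasDerivWithinAt_neg (convex_Ioi _) (continuousOn_profile (by linarith))
    (fun g hg => (hasDerivAt_profile (by linarith) (interior_subset hg)).hasDerivWithinAt) ?_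
  intro g hg
  rw [interior_Ioi] at hg
  have hF := profile_pos (by linarith) hg
  have hP : 0 < g - (1+s)/4 := by linarith [mem_Ioi.mp hg]
  have hM : 0 < g - (1-s)/4 := by linarith [mem_Ioi.mp hg]
  have h2 : 0 < g - 1/2 := by linarith [mem_Ioi.mp hg]
  have := mul_pos hF h2
  rw [neg_mul, neg_div]
  exact neg_neg_of_pos (by positivity)

theorem tendsto_profile_nhdsGT (hs : 1 < s) :
    Tendsto (profile s) (𝓝[>] ((1+s)/4)) atTop := by
  have hsub : Tendsto (fun g => g - (1+s)/4) (𝓝[>] ((1+s)/4)) (𝓝[>] 0) := by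
    refine tendsto_nhdsWithin_iff.mpr ⟨?_, eventually_nhdsWithin_of_forall fun g hg => ?_⟩
    · simpa using ((continuous_sub_right ((1+s)/4)).tendsto ((1+s)/4)).mono_left
        nhdsWithin_le_nhds
    · exact sub_pos.mpr (mem_Ioi.mp hg)
  have ha : -(1:ℝ)/2 + 1/(2*s) < 0 := by
    have : 1/(2*s) < 1/2 := by rw [div_lt_div_iff₀] <;> linarith
    linarith
  have hM : (1+s)/4 - (1-s)/4 ≠ 0 := by linarith
  have hcont : ContinuousAt (fun g => (1/2) * (g - (1-s)/4) ^ (-(1:ℝ)/2 - 1/(2*s))) ((1+s)/4) :=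
    continuousAt_const.mul ((continuousAt_id.sub continuousAt_const).rpow_const (Or.inl hM))
  have hlim := (hcont.tendsto.mono_left nhdsWithin_le_nhds).pos_mul_atTop
    (by have := Real.rpow_pos_of_pos (by linarith : (0:ℝ) < (1+s)/4 - (1-s)/4)
          (-(1:ℝ)/2 - 1/(2*s)); positivity)
    ((tendsto_rpow_neg_nhdsGT_zero ha).comp hsub)
  refine hlim.congr fun g => ?_
  simp only [profile, Function.comp]
  ring

theorem tendsto_profile_mul_self_atTop :
    Tendsto (fun g => profile s g * g) atTop (𝓝 (1/2)) := by
  have hfac : ∀ x : ℝ, Tendsto (fun g : ℝ => (g - x) / g) atTop (𝓝 1) := fun x => by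
    have := tendsto_const_nhds (x := (1:ℝ)).sub (tendsto_const_nhds (x := x).div_atTop tendsto_id)
    rw [sub_zero] at this
    refine this.congr' ?_
    filter_upwards [eventually_ne_atTop 0] with g hg
    simp only [id]
    field_simp
  have hlim := ((hfac ((1+s)/4)).rpow_const (p := -(1:ℝ)/2 + 1/(2*s)) (Or.inl one_ne_zero)).mul
    ((hfac ((1-s)/4)).rpow_const (p := -(1:ℝ)/2 - 1/(2*s)) (Or.inl one_ne_zero))
  rw [Real.one_rpow, Real.one_rpow, one_mul] at hlim
  rw [← mul_one (1/2 : ℝ)]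
  refine ((tendsto_const_nhds (x := (1/2 : ℝ))).mul hlim).congr' ?_
  filter_upwards [eventually_gt_atTop 0, eventually_gt_atTop ((1+s)/4),
    eventually_gt_atTop ((1-s)/4)] with g hg hP hM
  rw [Real.div_rpow (by linarith) hg.le, Real.div_rpow (by linarith) hg.le]
  have hpow : g ^ (-(1:ℝ)/2 + 1/(2*s)) * g ^ (-(1:ℝ)/2 - 1/(2*s)) = g⁻¹ := by
    rw [← Real.rpow_add hg, ← Real.rpow_neg_one]
    ring_nf
  rw [div_mul_div_comm, hpow, div_inv_eq_mul]
  simp only [profile]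
  ring

-- The factor `(g - g₊)(g - g₋) = g² - g/2 - c` of `hasDerivAt_profile` cancels against `t G'`.
theorem hasDerivAt_profile_div_self {c : ℝ} (hs : 1 < s) (hsc : s^2 = 1 + 16*c) {f : ℝ → ℝ}
    {t : ℝ} (ht : 0 < t) (hft : HasDerivAt f (c * t / (f t - t/2)) t)
    (hG : (1+s)/4 < f t / t) :
    HasDerivAt (fun u => profile s (f u / u) / u) 0 t := by
  have hdiv : HasDerivAt (fun u => f u / u) _ t := hft.div (hasDerivAt_id' t) ht.ne'
  have h := ((hasDerivAt_profile (by linarith) hG).comp (h := fun u => f u / u) t hdiv).div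
    (hasDerivAt_id' t) ht.ne'
  refine h.congr_deriv ?_
  have hfG : f t = f t / t * t := by field_simp
  simp only [Function.comp_apply]
  generalize profile s (f t / t) = F
  generalize f t / t = g at hG hfG ⊢
  rw [hfG]
  have hP : g * 4 - (1 + s) ≠ 0 := by linarith
  have hM : g * 4 - (1 - s) ≠ 0 := by linarith
  have h2 : g * 2 - 1 ≠ 0 := by linarith
  field_simp
  linear_combination 2 * F * hsc

theorem tendsto_profile_div_self_nhdsGT {f : ℝ → ℝ} (hf0 : Tendsto f (𝓝[>] 0) (𝓝 (1/2))) :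
    Tendsto (fun t => profile s (f t / t) / t) (𝓝[>] 0) (𝓝 1) := by
  have hG : Tendsto (fun t => f t / t) (𝓝[>] 0) atTop := by
    simpa only [div_eq_mul_inv] using hf0.pos_mul_atTop one_half_pos tendsto_inv_nhdsGT_zero
  have h := ((tendsto_profile_mul_self_atTop (s := s)).comp hG).div hf0 one_half_pos.ne'
  rw [div_self one_half_pos.ne'] at h
  refine h.congr' ?_
  filter_upwards [self_mem_nhdsWithin, hf0.eventually (lt_mem_nhds one_half_pos)]
    with t ht hft
  have : t ≠ 0 := (mem_Ioi.mp ht).ne'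
  simp only [Pi.div_apply, Function.comp_apply]
  field_simp

theorem profile_div_self_eq {c r : ℝ} (hs : 1 < s) (hsc : s^2 = 1 + 16*c) {f : ℝ → ℝ}
    (hr : 0 < r) (hf : ContinuousOn f (Icc 0 r)) (hf0 : f 0 = 1/2)
    (hder : ∀ t ∈ Ioo 0 r, HasDerivAt f (c * t / (f t - t/2)) t)
    (hG : ∀ t ∈ Ioc 0 r, (1+s)/4 < f t / t) :
    profile s (f r / r) = r := by
  set Φ := fun u => profile s (f u / u) / u
  have hconst : ∀ a ∈ Ioc 0 r, Φ r = Φ a := by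
    intro a ha
    have hsub : Icc a r ⊆ Ioc 0 r := fun x hx => ⟨ha.1.trans_le hx.1, hx.2⟩
    have hne : ∀ x ∈ Icc a r, x ≠ 0 := fun x hx => (hsub hx).1.ne'
    have hcont : ContinuousOn Φ (Icc a r) :=
      ((continuousOn_profile (by linarith)).comp
        ((hf.mono (hsub.trans Ioc_subset_Icc_self)).div continuousOn_id hne)
        fun x hx => hG x (hsub hx)).div continuousOn_id hne
    refine constant_of_has_deriv_right_zero hcont (fun x hx => ?_) r ⟨ha.2, le_rfl⟩
    exact (hasDerivAt_profile_div_self hs hsc (ha.1.trans_le hx.1)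
      (hder x ⟨ha.1.trans_le hx.1, hx.2⟩) (hG x ⟨ha.1.trans_le hx.1, hx.2.le⟩)).hasDerivWithinAt
  have hlim : Tendsto Φ (𝓝[>] 0) (𝓝 1) := by
    refine tendsto_profile_div_self_nhdsGT ?_
    rw [← hf0]
    exact ((hf 0 ⟨le_rfl, hr.le⟩).mono_of_mem_nhdsWithin (Icc_mem_nhdsGT hr)).tendsto
  have hΦ : Φ r = 1 := by
    refine tendsto_nhds_unique (tendsto_const_nhds.congr' ?_) hlim
    filter_upwards [Ioc_mem_nhdsGT hr] with a ha using hconst a ha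
  exact (div_eq_one_iff_eq hr.ne').mp hΦ

theorem lt_div_self_of_hasDerivAt {c R : ℝ} (hs : 1 < s) (hsc : s^2 = 1 + 16*c) {f : ℝ → ℝ}
    (hf : ContinuousOn f (Icc 0 R)) (hf0 : f 0 = 1/2)
    (hder : ∀ t ∈ Ioo 0 R, HasDerivAt f (c * t / (f t - t/2)) t) :
    ∀ t ∈ Ioc 0 R, (1+s)/4 < f t / t := by
  by_contra! hbad
  obtain ⟨t₁, ht₁, hle⟩ := hbad
  have hu : ContinuousOn (fun t => f t - (1+s)/4 * t) (Icc 0 R) :=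
    hf.sub (continuousOn_const.mul continuousOn_id)
  obtain ⟨r, hr, hur, hpos⟩ := hu.exists_first_zero (by simp [hf0]) ⟨ht₁.1.le, ht₁.2⟩
    (by rw [div_le_iff₀ ht₁.1] at hle; linarith)
  have hrR : r ≤ R := hr.2.trans ht₁.2
  have hgood : ∀ t ∈ Ioo 0 r, (1+s)/4 < f t / t := fun t ht => by
    rw [lt_div_iff₀ ht.1]; linarith [hpos t ⟨ht.1.le, ht.2⟩]
  have heq : ∀ t ∈ Ioo 0 r, profile s (f t / t) = t := fun t ht =>
    profile_div_self_eq hs hsc ht.1 (hf.mono (Icc_subset_Icc_right (ht.2.le.trans hrR))) hf0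
      (fun u hu => hder u ⟨hu.1, hu.2.trans (ht.2.trans_le hrR)⟩)
      (fun u hu => hgood u ⟨hu.1, hu.2.trans_lt ht.2⟩)
  -- `f t / t → g₊` from above as `t ↑ r`, where `profile s` blows up, yet `profile s (f t / t) = t`.
  have hG : Tendsto (fun t => f t / t) (𝓝[<] r) (𝓝[>] ((1+s)/4)) := by
    refine tendsto_nhdsWithin_iff.mpr ⟨?_, ?_⟩
    · have hfr : f r / r = (1+s)/4 := by field_simp [hr.1.ne']; linarith
      rw [← hfr]
      exact (((hf r ⟨hr.1.le, hrR⟩).mono_of_mem_nhdsWithin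
        (Icc_mem_nhdsLT_of_mem ⟨hr.1, hrR⟩)).tendsto.div
        (tendsto_id.mono_left nhdsWithin_le_nhds) hr.1.ne')
    · filter_upwards [Ioo_mem_nhdsLT hr.1] with t ht using hgood t ht
  have htop : Tendsto (fun t : ℝ => t) (𝓝[<] r) atTop := by
    refine ((tendsto_profile_nhdsGT hs).comp hG).congr' ?_
    filter_upwards [Ioo_mem_nhdsLT hr.1] with t ht using heq t ht
  exact not_tendsto_atTop_of_tendsto_nhds (tendsto_id.mono_left nhdsWithin_le_nhds) htop

end profile

theorem stmt15 (c : ℝ) (hc : 0 < c) (f : ℝ → ℝ)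
    (hf : ContinuousOn f (Set.Icc 0 1)) (hf0 : f 0 = 1/2)
    (hder : ∀ r ∈ Set.Ico (0:ℝ) 1,
      HasDerivWithinAt f (c * r / (f r - r/2)) (Set.Icc 0 1) r) :
    ∀ r ∈ Set.Ioc (0:ℝ) 1,
      (1 + Real.sqrt (1 + 16*c))/4 < f r / r ∧
      (1/2) * (f r / r - (1 + Real.sqrt (1 + 16*c))/4)
          ^ (-(1:ℝ)/2 + 1/(2 * Real.sqrt (1 + 16*c)))
        * (f r / r - (1 - Real.sqrt (1 + 16*c))/4)
          ^ (-(1:ℝ)/2 - 1/(2 * Real.sqrt (1 + 16*c))) = r ∧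
      ∀ g : ℝ, (1 + Real.sqrt (1 + 16*c))/4 < g →
        (1/2) * (g - (1 + Real.sqrt (1 + 16*c))/4)
            ^ (-(1:ℝ)/2 + 1/(2 * Real.sqrt (1 + 16*c)))
          * (g - (1 - Real.sqrt (1 + 16*c))/4)
            ^ (-(1:ℝ)/2 - 1/(2 * Real.sqrt (1 + 16*c))) = r →
        g = f r / r := by
  set s := Real.sqrt (1 + 16*c)
  have hsc : s^2 = 1 + 16*c := Real.sq_sqrt (by linarith)
  have hs : 1 < s := by nlinarith [Real.sqrt_nonneg (1 + 16*c)]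
  have hder' : ∀ t ∈ Ioo (0:ℝ) 1, HasDerivAt f (c * t / (f t - t/2)) t := fun t ht =>
    (hder t ⟨ht.1.le, ht.2⟩).hasDerivAt (Icc_mem_nhds ht.1 ht.2)
  have hG := lt_div_self_of_hasDerivAt hs hsc hf hf0 hder'
  intro r hr
  have hFr : profile s (f r / r) = r :=
    profile_div_self_eq hs hsc hr.1 (hf.mono (Icc_subset_Icc_right hr.2)) hf0
      (fun t ht => hder' t ⟨ht.1, ht.2.trans_le hr.2⟩) (fun t ht => hG t ⟨ht.1, ht.2.trans hr.2⟩)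
  exact ⟨hG r hr, hFr, fun g hg hgr =>
    (profile_strictAntiOn hs).injOn hg (hG r hr) (hgr.trans hFr.symm)⟩
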